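/- Under the efficient-market hypothesis conditioning ℰ (true prefix probabilities pᵢ known, conditional suffix probabilities all 1/2, and counts nᵢ·π̂ᵢ independent Binomial(nᵢ, 1/2)), the moment-generating function of the estimated market information Î^{L+1} is M(t) = eᵗ · ∏_{i=1}^{2^L} ∑_{j=0}^{nᵢ} C(nᵢ,j)·2^{−nᵢ} · (j/nᵢ)^{t·pᵢ·(j/nᵢ)/ln 2} · (1 − j/nᵢ)^{t·pᵢ·(1−j/nᵢ)/ln 2}, for all t for which the expression is defined. -/

import Mathlib

/-!
`Î^{L+1}` is a sum of terms each depending on a single count, so under independent counts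
the expectation of `exp (t Î)` factors into a product over prefixes. Since
`x log (p x) = x log p + x log x` even at `x = 0`, each term equals
`p + (p x log x + p (1-x) log (1-x)) / log 2`, whose exponential is `e^{t p} x^{t p x / log 2} (1-x)^{t p (1-x) / log 2}`; finally
`∏ e^{t pᵢ} = e^t` because the `pᵢ` sum to one.
-/

open Real Finset

/-- The estimated market information Î^{L+1} = H^{L+1}_⋆ − Ĥ^{L+1} computed
from empirical conditional suffix frequencies `j i / n i` (with
H^{L+1}_⋆ = 1 + H^L; the convention 0·log₂0 = 0 is automatic). -/
noncomputable def estInfo (L : ℕ) (p : Fin (2 ^ L) → ℝ) (n : Fin (2 ^ L) → ℕ)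
    (j : (i : Fin (2 ^ L)) → Fin (n i + 1)) : ℝ :=
  ∑ i, (-(p i) * logb 2 (p i / 2)
    + p i * ((j i : ℝ) / (n i : ℝ)) * logb 2 (p i * ((j i : ℝ) / (n i : ℝ)))
    + p i * (1 - (j i : ℝ) / (n i : ℝ)) * logb 2 (p i * (1 - (j i : ℝ) / (n i : ℝ))))

/-- The summand of `estInfo` for a prefix of probability `p` and empirical suffix frequency `x`. -/
noncomputable def prefixInfo (p x : ℝ) : ℝ :=
  -p * logb 2 (p / 2) + p * x * logb 2 (p * x) + p * (1 - x) * logb 2 (p * (1 - x))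

lemma estInfo_eq_sum_prefixInfo (L : ℕ) (p : Fin (2 ^ L) → ℝ) (n : Fin (2 ^ L) → ℕ)
    (j : (i : Fin (2 ^ L)) → Fin (n i + 1)) :
    estInfo L p n j = ∑ i, prefixInfo (p i) ((j i : ℝ) / (n i : ℝ)) :=
  rfl

lemma mul_log_mul_of_ne_zero {p : ℝ} (hp : p ≠ 0) (x : ℝ) :
    x * log (p * x) = x * log p + x * log x := by
  rcases eq_or_ne x 0 with rfl | hx
  · simp
  rw [log_mul hp hx]
  ring

lemma prefixInfo_eq (p x : ℝ) :
    prefixInfo p x = p + (p * x * log x + p * (1 - x) * log (1 - x)) / log 2 := by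
  rcases eq_or_ne p 0 with rfl | hp
  · simp [prefixInfo]
  have hlog2 : log 2 ≠ 0 := (log_pos one_lt_two).ne'
  simp only [prefixInfo, logb, log_div hp two_ne_zero]
  field_simp
  linear_combination mul_log_mul_of_ne_zero hp x + mul_log_mul_of_ne_zero hp (1 - x)

lemma rpow_eq_exp_log_mul_of_nonneg {x y : ℝ} (hx : 0 ≤ x) (hy : x = 0 → y = 0) :
    x ^ y = exp (log x * y) := by
  rcases hx.eq_or_lt with rfl | hx
  · simp [hy rfl]
  · exact rpow_def_of_pos hx y

lemma exp_mul_prefixInfo (t p : ℝ) {x : ℝ} (hx0 : 0 ≤ x) (hx1 : x ≤ 1) :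
    exp (t * prefixInfo p x) =
      exp (t * p) * x ^ (t * p * x / log 2) * (1 - x) ^ (t * p * (1 - x) / log 2) := by
  rw [rpow_eq_exp_log_mul_of_nonneg hx0 (by rintro rfl; simp),
    rpow_eq_exp_log_mul_of_nonneg (sub_nonneg.2 hx1) (by intro h; simp [h]),
    ← exp_add, ← exp_add, prefixInfo_eq]
  congr 1
  ring

theorem stmt18_general (L : ℕ) (p : Fin (2 ^ L) → ℝ)
    (hsum : ∑ i, p i = 1)
    (n : Fin (2 ^ L) → ℕ) (t : ℝ) :
    ∑ j : (i : Fin (2 ^ L)) → Fin (n i + 1),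
        (∏ i, ((n i).choose (j i) : ℝ) / 2 ^ (n i)) * Real.exp (t * estInfo L p n j)
      = Real.exp t * ∏ i, ∑ k ∈ Finset.range (n i + 1),
          (((n i).choose k : ℝ) / 2 ^ (n i)) *
            ((k : ℝ) / (n i : ℝ)) ^ (t * p i * ((k : ℝ) / (n i : ℝ)) / Real.log 2) *
            (1 - (k : ℝ) / (n i : ℝ)) ^ (t * p i * (1 - (k : ℝ) / (n i : ℝ)) / Real.log 2) := by
  calc _ = ∑ j : (i : Fin (2 ^ L)) → Fin (n i + 1), ∏ i, ((n i).choose (j i) : ℝ) / 2 ^ (n i) *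
          exp (t * prefixInfo (p i) ((j i : ℝ) / (n i : ℝ))) := by
        simp only [estInfo_eq_sum_prefixInfo, mul_sum, exp_sum, prod_mul_distrib]
    _ = ∏ i, ∑ k : Fin (n i + 1), ((n i).choose k : ℝ) / 2 ^ (n i) *
          exp (t * prefixInfo (p i) ((k : ℝ) / (n i : ℝ))) := by rw [Fintype.prod_sum]
    _ = ∏ i, exp (t * p i) * ∑ k ∈ range (n i + 1), ((n i).choose k : ℝ) / 2 ^ (n i) *
            ((k : ℝ) / (n i : ℝ)) ^ (t * p i * ((k : ℝ) / (n i : ℝ)) / log 2) *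
            (1 - (k : ℝ) / (n i : ℝ)) ^ (t * p i * (1 - (k : ℝ) / (n i : ℝ)) / log 2) := by
        refine prod_congr rfl fun i _ => ?_
        rw [mul_sum, ← Fin.sum_univ_eq_sum_range]
        refine sum_congr rfl fun k _ => ?_
        have hk : ((k : ℕ) : ℝ) / (n i : ℝ) ≤ 1 :=
          div_le_one_of_le₀ (by exact_mod_cast k.is_le) (Nat.cast_nonneg _)
        rw [exp_mul_prefixInfo t (p i) (by positivity) hk]
        ring
    _ = _ := by rw [prod_mul_distrib, ← exp_sum, ← mul_sum, hsum, mul_one]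

/-- Moment-generating function of Î^{L+1} under the EMH conditioning ℰ: the
counts `j i` are independent Binomial(n i, 1/2), so
M(t) = eᵗ ∏ᵢ ∑ⱼ C(nᵢ,j) 2^{−nᵢ} (j/nᵢ)^{t pᵢ (j/nᵢ)/ln 2} (1−j/nᵢ)^{t pᵢ (1−j/nᵢ)/ln 2},
where the powers are real powers (with 0⁰ = 1). -/
theorem stmt18 (L : ℕ) (hL : 0 < L) (p : Fin (2 ^ L) → ℝ)
    (hp : ∀ i, 0 < p i) (hp1 : ∀ i, p i ≤ 1) (hsum : ∑ i, p i = 1)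
    (n : Fin (2 ^ L) → ℕ) (hn : ∀ i, 1 ≤ n i) (t : ℝ) :
    ∑ j : (i : Fin (2 ^ L)) → Fin (n i + 1),
        (∏ i, ((n i).choose (j i) : ℝ) / 2 ^ (n i)) * Real.exp (t * estInfo L p n j)
      = Real.exp t * ∏ i, ∑ k ∈ Finset.range (n i + 1),
          (((n i).choose k : ℝ) / 2 ^ (n i)) *
            ((k : ℝ) / (n i : ℝ)) ^ (t * p i * ((k : ℝ) / (n i : ℝ)) / Real.log 2) *
            (1 - (k : ℝ) / (n i : ℝ)) ^ (t * p i * (1 - (k : ℝ) / (n i : ℝ)) / Real.log 2) :=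
  stmt18_general L p hsum n t
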